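/- arXiv:2512.23074 — 4 statements merged into one kernel-verified Lean document; each statement's English description precedes it below -/
import Mathlib

section
/- Let A be an associative algebra with Reynolds–Nijenhuis operator P. Define a new bilinear product a ⋆ b = a·P(b) + P(a)·b − P(a·b). Then (A, ⋆) is an associative algebra. -/
/-!
Measure the failure of `P` to be multiplicative from `(A, ⋆)` to `(A, ·)` by the torsion
`T(a, b) = P a · P b - P (a ⋆ b)`. Expanding both sides, the associator of `⋆` is the
Hochschild coboundary of `T`, `a · T(b, c) - T(a · b, c) + T(a, b · c) - T(a, b) · c`,
for every linear `P`. The Reynolds–Nijenhuis identity says exactly that `T` vanishes.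
-/

/-- The induced product of a Reynolds–Nijenhuis operator. -/
def rnStar {K : Type*} [Field K] [CharZero K]
    {A : Type*} [NonUnitalRing A] [Module K A] [SMulCommClass K A A] [IsScalarTower K A A]
    (P : A →ₗ[K] A) (a b : A) : A :=
  a * P b + P a * b - P (a * b)

section Torsion

variable {K : Type*} [Field K] [CharZero K]
    {A : Type*} [NonUnitalRing A] [Module K A] [SMulCommClass K A A] [IsScalarTower K A A]
    (P : A →ₗ[K] A)

def rnTorsion (a b : A) : A :=
  P a * P b - P (rnStar P a b)

theorem rnStar_assoc_sub (a b c : A) :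
    rnStar P (rnStar P a b) c - rnStar P a (rnStar P b c) =
      a * rnTorsion P b c - rnTorsion P (a * b) c + rnTorsion P a (b * c) -
        rnTorsion P a b * c := by
  simp only [rnTorsion, rnStar, mul_add, add_mul, mul_sub, sub_mul, mul_assoc, map_add, map_sub]
  abel

theorem rnTorsion_eq_zero (hN : ∀ a b : A, P a * P b = P (P a * b + a * P b - P (a * b)))
    (a b : A) : rnTorsion P a b = 0 := by
  rw [rnTorsion, rnStar, add_comm, ← hN, sub_self]

end Torsion

theorem rnStar_assoc_general {K : Type*} [Field K] [CharZero K]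
    {A : Type*} [NonUnitalRing A] [Module K A] [SMulCommClass K A A] [IsScalarTower K A A]
    (P : A →ₗ[K] A)
    (hN : ∀ a b : A, P a * P b = P (P a * b + a * P b - P (a * b))) :
    ∀ a b c : A, rnStar P (rnStar P a b) c = rnStar P a (rnStar P b c) := by
  intro a b c
  rw [← sub_eq_zero, rnStar_assoc_sub]
  simp only [rnTorsion_eq_zero P hN, mul_zero, zero_mul, sub_zero, add_zero]

theorem rnStar_assoc {K : Type*} [Field K] [CharZero K]
    {A : Type*} [NonUnitalRing A] [Module K A] [SMulCommClass K A A] [IsScalarTower K A A]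
    (P : A →ₗ[K] A)
    (hN : ∀ a b : A, P a * P b = P (P a * b + a * P b - P (a * b)))
    (hR : ∀ a b : A, P a * P b = P (a * P b + P a * b - P a * P b)) :
    ∀ a b c : A, rnStar P (rnStar P a b) c = rnStar P a (rnStar P b c) :=
  rnStar_assoc_general P hN
end

section
/- Let A be an associative algebra with Reynolds–Nijenhuis operator P, and let ⋆ be the induced product a ⋆ b = a·P(b) + P(a)·b − P(a·b). Then P is also a Reynolds–Nijenhuis operator on (A, ⋆); in particular P satisfies both the Nijenhuis identity P(a) ⋆ P(b) = P(P(a) ⋆ b + a ⋆ P(b) − P(a ⋆ b)) and the Reynolds identity P(a) ⋆ P(b) = P(a ⋆ P(b) + P(a) ⋆ b − P(a) ⋆ P(b)) with respect to ⋆. -/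
section AdditiveOperator

variable {A F : Type*} [NonUnitalRing A] [FunLike F A A] [AddMonoidHomClass F A A] (P : F)

theorem map_map_mul_eq_of_nijenhuis_of_reynolds
    (hN : ∀ a b : A, P a * P b = P (P a * b + a * P b - P (a * b)))
    (hR : ∀ a b : A, P a * P b = P (a * P b + P a * b - P a * P b)) (a b : A) :
    P (P (a * b)) = P (P a * P b) := by
  have h := (hN a b).symm.trans (hR a b)
  rw [add_comm (P a * b), map_sub, map_sub] at h
  exact sub_right_injective h

theorem map_mul_map_of_nijenhuis_of_reynolds
    (hN : ∀ a b : A, P a * P b = P (P a * b + a * P b - P (a * b)))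
    (hR : ∀ a b : A, P a * P b = P (a * P b + P a * b - P a * P b)) (a b : A) :
    P (P a * P b) = P (P a) * P (P b) := by
  have hPP := map_map_mul_eq_of_nijenhuis_of_reynolds P hN hR
  calc P (P a * P b)
      = P (P (a * P b + P a * b - P a * P b)) := by rw [← hR]
    _ = P (P a * P (P b) + P (P a) * P b - P (P a) * P (P b)) := by
        simp only [map_add, map_sub, hPP]
    _ = P (P a) * P (P b) := (hR (P a) (P b)).symm

end AdditiveOperator

section InducedProduct

variable {K A : Type*} [Field K] [CharZero K] [NonUnitalRing A] [Module K A]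
  [SMulCommClass K A A] [IsScalarTower K A A] {P : A →ₗ[K] A}

theorem map_rnStar_of_nijenhuis
    (hN : ∀ a b : A, P a * P b = P (P a * b + a * P b - P (a * b))) (a b : A) :
    P (rnStar P a b) = P a * P b := by
  rw [rnStar, hN, add_comm (a * P b)]

theorem rnStar_nijenhuis_of_nijenhuis
    (hN : ∀ a b : A, P a * P b = P (P a * b + a * P b - P (a * b))) (a b : A) :
    rnStar P (P a) (P b) = P (rnStar P (P a) b + rnStar P a (P b) - P (rnStar P a b)) := by
  simp only [map_add, map_sub, map_rnStar_of_nijenhuis hN]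
  rw [rnStar]
  abel

theorem rnStar_reynolds_of_nijenhuis_of_reynolds
    (hN : ∀ a b : A, P a * P b = P (P a * b + a * P b - P (a * b)))
    (hR : ∀ a b : A, P a * P b = P (a * P b + P a * b - P a * P b)) (a b : A) :
    rnStar P (P a) (P b) = P (rnStar P a (P b) + rnStar P (P a) b - rnStar P (P a) (P b)) := by
  simp only [map_add, map_sub, map_rnStar_of_nijenhuis hN]
  rw [rnStar, map_mul_map_of_nijenhuis_of_reynolds P hN hR]

end InducedProduct

theorem rn_operator_on_star {K : Type*} [Field K] [CharZero K]
    {A : Type*} [NonUnitalRing A] [Module K A] [SMulCommClass K A A] [IsScalarTower K A A]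
    (P : A →ₗ[K] A)
    (hN : ∀ a b : A, P a * P b = P (P a * b + a * P b - P (a * b)))
    (hR : ∀ a b : A, P a * P b = P (a * P b + P a * b - P a * P b)) :
    (∀ a b : A, rnStar P (P a) (P b)
        = P (rnStar P (P a) b + rnStar P a (P b) - P (rnStar P a b))) ∧
    (∀ a b : A, rnStar P (P a) (P b)
        = P (rnStar P a (P b) + rnStar P (P a) b - rnStar P (P a) (P b))) :=
  ⟨rnStar_nijenhuis_of_nijenhuis hN, rnStar_reynolds_of_nijenhuis_of_reynolds hN hR⟩
end

section
/- Let A be an associative algebra and P : A → A a linear involution, P² = Id. If P is a Reynolds–Nijenhuis operator, then P is a modified Rota–Baxter operator of weight −1, i.e., P(a·b) = P(a)·b + a·P(b) − a·b for all a, b ∈ A. -/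
/-!
Equating the right-hand sides of the Nijenhuis and Reynolds identities and cancelling the
injective `P` shows that `P` is multiplicative. Then `P (a * b) = P a * P b` is the left-hand
side of the Nijenhuis identity, and cancelling `P` once more gives the modified Rota–Baxter
identity of weight `-1`.
-/

section

variable {A : Type*} [NonUnitalRing A] {P : A → A}

theorem map_mul_of_nijenhuis_of_reynolds (hP : Function.Injective P)
    (hN : ∀ a b : A, P a * P b = P (P a * b + a * P b - P (a * b)))
    (hR : ∀ a b : A, P a * P b = P (a * P b + P a * b - P a * P b)) (a b : A) :
    P (a * b) = P a * P b := by
  have h := hP ((hN a b).symm.trans (hR a b))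
  rw [add_comm (P a * b)] at h
  exact sub_right_injective h

theorem modified_rotaBaxter_of_nijenhuis_of_map_mul (hP : Function.Injective P)
    (hN : ∀ a b : A, P a * P b = P (P a * b + a * P b - P (a * b)))
    (hmul : ∀ a b : A, P (a * b) = P a * P b) (a b : A) :
    P (a * b) = P a * b + a * P b - a * b := by
  have h := hP ((hmul a b).trans (hN a b))
  rw [eq_sub_iff_add_eq'] at h
  exact eq_sub_of_add_eq h

end

theorem rn_involution_modified_rotaBaxter_neg_one_general {K : Type*} [Field K]
    {A : Type*} [NonUnitalRing A] [Module K A]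
    (P : A →ₗ[K] A) (hP2 : ∀ a : A, P (P a) = a)
    (hN : ∀ a b : A, P a * P b = P (P a * b + a * P b - P (a * b)))
    (hR : ∀ a b : A, P a * P b = P (a * P b + P a * b - P a * P b)) :
    ∀ a b : A, P (a * b) = P a * b + a * P b - a * b := by
  have hinj : Function.Injective P := Function.Involutive.injective hP2
  exact modified_rotaBaxter_of_nijenhuis_of_map_mul hinj hN
    (map_mul_of_nijenhuis_of_reynolds hinj hN hR)

theorem rn_involution_modified_rotaBaxter_neg_one {K : Type*} [Field K] [CharZero K]
    {A : Type*} [NonUnitalRing A] [Module K A] [SMulCommClass K A A] [IsScalarTower K A A]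
    (P : A →ₗ[K] A) (hP2 : ∀ a : A, P (P a) = a)
    (hN : ∀ a b : A, P a * P b = P (P a * b + a * P b - P (a * b)))
    (hR : ∀ a b : A, P a * P b = P (a * P b + P a * b - P a * P b)) :
    ∀ a b : A, P (a * b) = P a * b + a * P b - a * b :=
  rn_involution_modified_rotaBaxter_neg_one_general P hP2 hN hR
end

section
/- Let (A, P) be a Reynolds–Nijenhuis associative algebra with representation (V, l, r, ξ), where ξ∘l(a) = l(P(a))∘ξ corresponds to the intertwining condition. Define new actions l'(a)v = l(a)(ξv) − ξ(l(a)v) + l(P(a))v and r'(a)v = r(a)(ξv) − ξ(r(a)v) + r(P(a))v. Then ξ∘l'(a) = l'(P(a))∘ξ and ξ∘r'(a) = r'(P(a))∘ξ for all a ∈ A. -/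
/-!
The induced actions are `l'(a) = [l(a), ξ] + l(P a)` and `r'(a) = [r(a), ξ] + r(P a)`. Since `ξ`
semiconjugates `l(a)` to `l(P a)` and `l(P a)` to `l(P (P a))`, and trivially itself to itself,
it semiconjugates every ring expression built from these, in particular `l'(a)` to `l'(P a)`;
likewise for `r`.
-/

theorem SemiconjBy.mul_sub_mul_add {R : Type*} [NonUnitalRing R] {x y y' y'' : R}
    (h : SemiconjBy x y y') (h' : SemiconjBy x y' y'') :
    SemiconjBy x (y * x - x * y + y') (y' * x - x * y' + y'') :=
  ((h.mul_right (Commute.refl x)).sub_right (SemiconjBy.mul_right (Commute.refl x) h)).add_right h'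

theorem rn_induced_actions_intertwine_general {K : Type*} [Field K]
    {A : Type*} [NonUnitalRing A] [Module K A]
    {V : Type*} [AddCommGroup V] [Module K V]
    (P : A →ₗ[K] A)
    (l r : A →ₗ[K] Module.End K V)
    (ξ : Module.End K V)
    (hξl : ∀ a : A, ξ * l a = l (P a) * ξ)
    (hξr : ∀ a : A, ξ * r a = r (P a) * ξ) :
    (∀ a : A, ξ * (l a * ξ - ξ * l a + l (P a))
        = (l (P a) * ξ - ξ * l (P a) + l (P (P a))) * ξ) ∧
    (∀ a : A, ξ * (r a * ξ - ξ * r a + r (P a))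
        = (r (P a) * ξ - ξ * r (P a) + r (P (P a))) * ξ) :=
  ⟨fun a => SemiconjBy.mul_sub_mul_add (hξl a) (hξl (P a)),
    fun a => SemiconjBy.mul_sub_mul_add (hξr a) (hξr (P a))⟩

theorem rn_induced_actions_intertwine {K : Type*} [Field K] [CharZero K]
    {A : Type*} [NonUnitalRing A] [Module K A] [SMulCommClass K A A] [IsScalarTower K A A]
    {V : Type*} [AddCommGroup V] [Module K V]
    (P : A →ₗ[K] A)
    (hN : ∀ a b : A, P a * P b = P (P a * b + a * P b - P (a * b)))
    (hR : ∀ a b : A, P a * P b = P (a * P b + P a * b - P a * P b))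
    (l r : A →ₗ[K] Module.End K V)
    (hl : ∀ a b : A, l (a * b) = l a * l b)
    (hr : ∀ a b : A, r (a * b) = r b * r a)
    (hlr : ∀ a b : A, l a * r b = r b * l a)
    (ξ : Module.End K V)
    (hξl : ∀ a : A, ξ * l a = l (P a) * ξ)
    (hξr : ∀ a : A, ξ * r a = r (P a) * ξ)
    (hlP : ∀ a b : A, l (P a) * l b = l a * l (P b))
    (hrP : ∀ a b : A, r (P a) * r b = r b * r (P a)) :
    (∀ a : A, ξ * (l a * ξ - ξ * l a + l (P a))
        = (l (P a) * ξ - ξ * l (P a) + l (P (P a))) * ξ) ∧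
    (∀ a : A, ξ * (r a * ξ - ξ * r a + r (P a))
        = (r (P a) * ξ - ξ * r (P a) + r (P (P a))) * ξ) :=
  rn_induced_actions_intertwine_general P l r ξ hξl hξr
end
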